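/- In a P-algebra, x ≤ y + z if and only if x·y' ≤ z, where y + z := (z'·y')'. -/
import Mathlib


structure PAlgebra (X : Type*) where
  zero : X
  compl : X → X
  mul : X → X → X
  le_refl : ∀ x, mul x x = x
  le_antisymm : ∀ x y, mul x y = x → mul y x = y → x = y
  le_trans : ∀ x y z, mul x y = x → mul y z = y → mul x z = x
  smile_symm : ∀ x y, mul (mul x y) x = mul x y → mul (mul y x) y = mul y x
  assoc_zero : ∀ x y z, mul (mul x y) z = zero ↔ mul (mul z y) x = zero
  assoc_left : ∀ x y z, mul x y = x → mul (mul x y) z = mul x (mul y z)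
  assoc_right : ∀ x y z, mul x y = x → mul (mul z y) x = mul z (mul y x)
  mul_mono : ∀ x y z, mul x y = x → mul (mul x z) (mul y z) = mul x z
  mul_le_right : ∀ x y, mul (mul x y) y = mul x y
  zero_mul : ∀ x, mul zero x = zero
  mul_compl : ∀ x, mul x (compl x) = zero
  superpos : ∀ x y z, mul (mul x y) z = mul x y →
    mul (mul x (compl y)) z = mul x (compl y) → mul x z = x

namespace PAlgebra

variable {X : Type*}

/-- x ≤ y iff x·y = x. -/
def le (P : PAlgebra X) (x y : X) : Prop := P.mul x y = x

/-- x ⌣ y iff x·y ≤ x. -/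
def smile (P : PAlgebra X) (x y : X) : Prop := P.le (P.mul x y) x

/-- 1 := 0'. -/
def one (P : PAlgebra X) : X := P.compl P.zero

/-- x + y := (y'·x')'. -/
def plus (P : PAlgebra X) (x y : X) : X := P.compl (P.mul (P.compl y) (P.compl x))

end PAlgebra
namespace PAlgebra

variable {X : Type*} (P : PAlgebra X)

lemma eq_zero_of_le_zero {w : X} (h : P.mul w P.zero = w) : w = P.zero :=
  P.le_antisymm w P.zero h (P.zero_mul w)

lemma mul_zero (x : X) : P.mul x P.zero = P.zero :=
  P.eq_zero_of_le_zero (P.mul_le_right x P.zero)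

lemma le_one (x : X) : P.mul x (P.compl P.zero) = x := by
  have h1 : P.mul (P.mul x P.zero) (P.compl P.zero) = P.mul x P.zero := by
    rw [P.mul_zero, P.zero_mul]
  exact P.superpos x P.zero (P.compl P.zero) h1 (P.mul_le_right x (P.compl P.zero))

lemma comm_zero {a b : X} (h : P.mul a b = P.zero) : P.mul b a = P.zero := by
  have := (P.assoc_zero a (P.compl P.zero) b).mp (by rw [P.le_one]; exact h)
  rwa [P.le_one] at this

lemma le_of_mul_compl_zero {w c : X} (h : P.mul w (P.compl c) = P.zero) :
    P.mul w c = w := by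
  refine P.superpos w c c (P.mul_le_right w c) ?_
  rw [h, P.zero_mul]

end PAlgebra

theorem stmt16_aux {X : Type*} (P : PAlgebra X) (x y z : X) :
    P.le x (P.plus y z) ↔ P.le (P.mul x (P.compl y)) z := by
  unfold PAlgebra.le PAlgebra.plus
  set a := P.mul (P.compl z) (P.compl y) with ha
  constructor
  · intro h
    -- x ≤ a', so x·a ≤ a'·a = 0, so x·a = 0, so a·x = 0, so (x·y')·z' = 0
    have h1 : P.mul (P.compl a) a = P.zero := P.comm_zero (P.mul_compl a)
    have h2 : P.mul x a = P.zero := by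
      have := P.mul_mono x (P.compl a) a h
      rw [h1] at this
      exact P.eq_zero_of_le_zero this
    have h3 : P.mul a x = P.zero := P.comm_zero h2
    have h4 : P.mul (P.mul x (P.compl y)) (P.compl z) = P.zero :=
      (P.assoc_zero x (P.compl y) (P.compl z)).mpr h3
    exact P.le_of_mul_compl_zero h4
  · intro h
    -- (x·y')·z' ≤ z·z' = 0, so a·x = 0, so x·a = 0, so x ≤ a'
    have h4 : P.mul (P.mul x (P.compl y)) (P.compl z) = P.zero := by
      have := P.mul_mono (P.mul x (P.compl y)) z (P.compl z) h
      rw [P.mul_compl] at this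
      exact P.eq_zero_of_le_zero this
    have h3 : P.mul a x = P.zero := (P.assoc_zero x (P.compl y) (P.compl z)).mp h4
    have h2 : P.mul x a = P.zero := P.comm_zero h3
    refine P.superpos x a (P.compl a) ?_ (P.mul_le_right x (P.compl a))
    rw [h2, P.zero_mul]


theorem stmt16 {X : Type*} (P : PAlgebra X) (x y z : X) :
    P.le x (P.plus y z) ↔ P.le (P.mul x (P.compl y)) z := stmt16_aux P x y z
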